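/- arXiv:1111.6991 — 5 statements merged into one kernel-verified Lean document; each statement's English description precedes it below -/
import Mathlib

section
/- With regularity defined via the choice-derived function α, if P₁ and P₂ are regular families of subsets of A, then P₁ ⊆ P₂ or P₂ ⊆ P₁. -/
/-!
Take `p` least in `P₁ \ P₂` and `r` least in `P₂ \ P₁`. Everything of `P₁` strictly below `p`
lies in `P₂`, so `p₁ = ⋃ {q ∈ P₁ : q ⊂ p}` is also the union of the members of `P₂` inside it.
If some member of `P₂` were not inside `p₁`, the least such member `u` would have exactly those
members below it, hence `u = p₁ ∪ {α p₁} = p ∈ P₂`; so all of `P₂`, in particular `r`, lies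
in `p₁ ⊆ p`. Symmetrically `p ⊆ r`, whence `p = r ∈ P₂`, a contradiction.
-/

open Set

variable {A : Type*}

/-- A family `P` of subsets of `A` is *regular* (w.r.t. the choice-derived map `α`) if:
(1) it is linearly ordered by `⊆`; (2) every nonempty subfamily has a `⊆`-least element;
(3) `∅ ∈ P`; (4) every nonempty `p ∈ P` equals `p₁ ∪ {α p₁}` where `p₁ = ⋃ {q ∈ P : q ⊂ p}`. -/
def RegularFamily (α : Set A → A) (P : Set (Set A)) : Prop :=
  (∀ p ∈ P, ∀ q ∈ P, p ⊆ q ∨ q ⊆ p) ∧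
  (∀ γ ⊆ P, γ.Nonempty → ∃ m ∈ γ, ∀ x ∈ γ, m ⊆ x) ∧
  (∅ ∈ P) ∧
  (∀ p ∈ P, p.Nonempty →
    p = (⋃₀ {q ∈ P | q ⊂ p}) ∪ {α (⋃₀ {q ∈ P | q ⊂ p})})

theorem Set.sUnion_setOf_subset_sUnion {S Q : Set (Set A)} (h : S ⊆ Q) :
    ⋃₀ {s ∈ Q | s ⊆ ⋃₀ S} = ⋃₀ S :=
  Subset.antisymm (sUnion_subset fun _ hs => hs.2)
    (sUnion_mono fun _ hs => ⟨h hs, subset_sUnion_of_mem hs⟩)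

namespace RegularFamily

variable {α : Set A → A} {P Q : Set (Set A)}

theorem exists_isLeast (hP : RegularFamily α P) {γ : Set (Set A)} (hγ : γ ⊆ P)
    (hne : γ.Nonempty) : ∃ m, IsLeast γ m := by
  obtain ⟨m, hm, hmin⟩ := hP.2.1 γ hγ hne
  exact ⟨m, hm, fun _ hx => hmin _ hx⟩

theorem setOf_ssubset_eq_setOf_subset (hP : RegularFamily α P) {c u : Set A}
    (hu : IsLeast {s ∈ P | ¬ s ⊆ c} u) : {s ∈ P | s ⊂ u} = {s ∈ P | s ⊆ c} := by
  obtain ⟨⟨huP, huc⟩, hmin⟩ := hu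
  ext s
  refine ⟨fun ⟨hsP, hsu⟩ => ⟨hsP, ?_⟩, fun ⟨hsP, hsc⟩ => ⟨hsP, ?_⟩⟩
  · exact by_contra fun hsc => hsu.not_subset (hmin ⟨hsP, hsc⟩)
  have hsu : s ⊆ u := (hP.1 s hsP u huP).resolve_right fun hus => huc (hus.trans hsc)
  exact ssubset_of_subset_not_subset hsu fun hus => huc (hus.trans hsc)

theorem union_singleton_mem (hP : RegularFamily α P) {c : Set A}
    (hc : ⋃₀ {s ∈ P | s ⊆ c} = c) (hex : ∃ s ∈ P, ¬ s ⊆ c) : c ∪ {α c} ∈ P := by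
  obtain ⟨u, hu⟩ := hP.exists_isLeast (fun _ hs => hs.1) hex
  have hune : u.Nonempty := nonempty_iff_ne_empty.2 fun h => hu.1.2 (h ▸ empty_subset c)
  have hrec := hP.2.2.2 u hu.1.1 hune
  rw [hP.setOf_ssubset_eq_setOf_subset hu, hc] at hrec
  exact hrec ▸ hu.1.1

theorem forall_subset_sUnion_ssubset_of_isLeast (hP : RegularFamily α P)
    (hQ : RegularFamily α Q) {p : Set A} (hp : IsLeast {q ∈ P | q ∉ Q} p) :
    ∀ s ∈ Q, s ⊆ ⋃₀ {q ∈ P | q ⊂ p} := by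
  obtain ⟨⟨hpP, hpQ⟩, hmin⟩ := hp
  by_contra! hex
  have hseg : {q ∈ P | q ⊂ p} ⊆ Q := fun q ⟨hqP, hqp⟩ =>
    by_contra fun hqQ => hqp.not_subset (hmin ⟨hqP, hqQ⟩)
  have hpne : p.Nonempty := nonempty_iff_ne_empty.2 fun h => hpQ (h ▸ hQ.2.2.1)
  have hmem := hQ.union_singleton_mem (sUnion_setOf_subset_sUnion hseg) hex
  rw [← hP.2.2.2 p hpP hpne] at hmem
  exact hpQ hmem

end RegularFamily

theorem regular_comparable_general
    (α : Set A → A)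
    (P₁ P₂ : Set (Set A)) (h₁ : RegularFamily α P₁) (h₂ : RegularFamily α P₂) :
    P₁ ⊆ P₂ ∨ P₂ ⊆ P₁ := by
  by_contra! hcon
  obtain ⟨p, hp⟩ := h₁.exists_isLeast (fun _ hq => hq.1) (not_subset.1 hcon.1)
  obtain ⟨r, hr⟩ := h₂.exists_isLeast (fun _ hq => hq.1) (not_subset.1 hcon.2)
  have hpr : p ⊆ r := (h₂.forall_subset_sUnion_ssubset_of_isLeast h₁ hr p hp.1.1).trans
    (sUnion_subset fun _ hq => hq.2.1)
  have hrp : r ⊆ p := (h₁.forall_subset_sUnion_ssubset_of_isLeast h₂ hp r hr.1.1).trans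
    (sUnion_subset fun _ hq => hq.2.1)
  exact hp.1.2 (Subset.antisymm hpr hrp ▸ hr.1.1)

theorem regular_comparable
    (φ : Set A → A) (hφ : ∀ X : Set A, X.Nonempty → φ X ∈ X)
    (α : Set A → A) (hα : ∀ X : Set A, α X = φ Xᶜ)
    (P₁ P₂ : Set (Set A)) (h₁ : RegularFamily α P₁) (h₂ : RegularFamily α P₂) :
    P₁ ⊆ P₂ ∨ P₂ ⊆ P₁ :=
  regular_comparable_general α P₁ P₂ h₁ h₂
end

section
/- The union Q of all regular families of subsets of A is itself a regular family. -/
/-!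
Any two regular families `P`, `P'` agree as far as they go: by a double well-founded induction,
for `p ∈ P` and `p' ∈ P'` the smaller of the two also lies in the other family, since an element
of a regular family is determined by its strict predecessors. Hence every regular family is an
initial segment of the union `Q`, which makes `Q` a chain, transfers least elements from the
families to `Q`, and leaves the predecessors of each `p ∈ P` unchanged when passing from `P` to `Q`.
-/

open Set

variable {A : Type*}

namespace RegularFamily

variable {α : Set A → A} {P P' : Set (Set A)}

theorem induction (hP : RegularFamily α P) {Φ : Set A → Prop}
    (h : ∀ p ∈ P, (∀ q ∈ P, q ⊂ p → Φ q) → Φ p) : ∀ p ∈ P, Φ p := by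
  by_contra! ⟨p, hpP, hp⟩
  obtain ⟨m, ⟨hmP, hm⟩, hmin⟩ := hP.2.1 {p ∈ P | ¬ Φ p} (fun x hx => hx.1) ⟨p, hpP, hp⟩
  refine hm (h m hmP fun q hq hqm => ?_)
  by_contra hq'
  exact hqm.not_subset (hmin q ⟨hq, hq'⟩)

theorem subset_mem_or_superset_mem (hP : RegularFamily α P) (hP' : RegularFamily α P') :
    ∀ p ∈ P, ∀ p' ∈ P', (p ⊆ p' ∧ p ∈ P') ∨ (p' ⊆ p ∧ p' ∈ P) := by
  refine hP.induction fun p hpP ih => hP'.induction fun p' hp'P' ih' => ?_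
  by_contra! hcon
  obtain ⟨hleft, hright⟩ := hcon
  have hp : p.Nonempty := by
    rw [nonempty_iff_ne_empty]
    rintro rfl
    exact hleft (empty_subset p') hP'.2.2.1
  have hp' : p'.Nonempty := by
    rw [nonempty_iff_ne_empty]
    rintro rfl
    exact hright (empty_subset p) hP.2.2.1
  have below_p' : ∀ q ∈ P', q ⊂ p' → q ∈ P ∧ q ⊂ p := by
    intro q hq hqp'
    rcases ih' q hq hqp' with ⟨hpq, hpP'⟩ | ⟨hqp, hqP⟩
    · exact absurd hpP' (hleft (hpq.trans hqp'.subset))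
    · refine ⟨hqP, hqp.ssubset_of_ne ?_⟩
      rintro rfl
      exact hleft hqp'.subset hq
  have below_p : ∀ q ∈ P, q ⊂ p → q ∈ P' ∧ q ⊂ p' := by
    intro q hq hqp
    rcases ih q hq hqp p' hp'P' with ⟨hqp', hqP'⟩ | ⟨hp'q, hp'P⟩
    · refine ⟨hqP', hqp'.ssubset_of_ne ?_⟩
      rintro rfl
      exact hright hqp.subset hq
    · exact absurd hp'P (hright (hp'q.trans hqp.subset))
  have hpred : {q ∈ P | q ⊂ p} = {q ∈ P' | q ⊂ p'} :=
    Set.ext fun q => ⟨fun ⟨hq, hqp⟩ => below_p q hq hqp, fun ⟨hq, hqp'⟩ => below_p' q hq hqp'⟩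
  have hpp' : p = p' := by
    rw [hP.2.2.2 p hpP hp, hP'.2.2.2 p' hp'P' hp', hpred]
  exact hleft hpp'.subset (hpp' ▸ hp'P')

theorem mem_of_subset (hP : RegularFamily α P) (hP' : RegularFamily α P') {p q : Set A}
    (hp : p ∈ P) (hq : q ∈ P') (hqp : q ⊆ p) : q ∈ P := by
  rcases hP.subset_mem_or_superset_mem hP' p hp q hq with ⟨hpq, -⟩ | ⟨-, hqP⟩
  · exact hpq.antisymm hqp ▸ hp
  · exact hqP

theorem singleton_empty (α : Set A → A) : RegularFamily α {(∅ : Set A)} := by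
  refine ⟨?_, ?_, rfl, ?_⟩
  · rintro p rfl q rfl
    exact Or.inl le_rfl
  · rintro γ hγ ⟨x, hx⟩
    exact ⟨x, hx, fun y _ => (hγ hx : x = ∅) ▸ empty_subset y⟩
  · rintro p rfl hne
    exact absurd rfl hne.ne_empty

end RegularFamily

theorem union_of_regulars_regular_general
    (α : Set A → A) :
    RegularFamily α {p : Set A | ∃ P : Set (Set A), RegularFamily α P ∧ p ∈ P} := by
  set Q : Set (Set A) := {p : Set A | ∃ P : Set (Set A), RegularFamily α P ∧ p ∈ P}
  have hchain : ∀ p ∈ Q, ∀ q ∈ Q, p ⊆ q ∨ q ⊆ p := by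
    rintro p ⟨P, hP, hpP⟩ q ⟨P', hP', hqP'⟩
    exact (hP.subset_mem_or_superset_mem hP' p hpP q hqP').imp And.left And.left
  refine ⟨hchain, ?_, ⟨{∅}, RegularFamily.singleton_empty α, rfl⟩, ?_⟩
  · rintro γ hγ ⟨x, hxγ⟩
    obtain ⟨P, hP, hxP⟩ := hγ hxγ
    have hbelow : {y ∈ γ | y ⊆ x} ⊆ P := fun y ⟨hy, hyx⟩ =>
      let ⟨_, hP', hyP'⟩ := hγ hy
      hP.mem_of_subset hP' hxP hyP' hyx
    obtain ⟨m, ⟨hmγ, hmx⟩, hmin⟩ := hP.2.1 _ hbelow ⟨x, hxγ, subset_rfl⟩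
    refine ⟨m, hmγ, fun y hy => ?_⟩
    rcases hchain y (hγ hy) x (hγ hxγ) with hyx | hxy
    · exact hmin y ⟨hy, hyx⟩
    · exact hmx.trans hxy
  · rintro p ⟨P, hP, hpP⟩ hne
    have hpred : {q ∈ Q | q ⊂ p} = {q ∈ P | q ⊂ p} :=
      Set.ext fun q => ⟨fun ⟨⟨_, hP', hqP'⟩, hqp⟩ => ⟨hP.mem_of_subset hP' hpP hqP' hqp.subset, hqp⟩,
        fun ⟨hqP, hqp⟩ => ⟨⟨P, hP, hqP⟩, hqp⟩⟩
    rw [hpred]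
    exact hP.2.2.2 p hpP hne

theorem union_of_regulars_regular
    (φ : Set A → A) (hφ : ∀ X : Set A, X.Nonempty → φ X ∈ X)
    (α : Set A → A) (hα : ∀ X : Set A, α X = φ Xᶜ) :
    RegularFamily α {p : Set A | ∃ P : Set (Set A), RegularFamily α P ∧ p ∈ P} :=
  union_of_regulars_regular_general α
end

section
/- The union of all sets belonging to Q, the union of all regular families of subsets of A, equals A itself: ⋃Q = A. -/
open Set

variable {A : Type*}

/-!
A regular family is built by transfinite recursion: the `j`-th set is the union `U` of all
earlier ones with `α U` adjoined. As long as `U ≠ A`, the point `α U = φ (A \ U)` is new, so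
the points `α U` are pairwise distinct; there are too many ordinals for that to go on forever,
so at some first stage `j₀` the union reaches all of `A`. The sets built before `j₀`, together
with `∅`, form a regular family whose union is `A`.
-/

section AlphaChain

variable (α : Set A → A) {J : Type*} [PartialOrder J] [WellFoundedLT J]

noncomputable def alphaChain : J → Set A :=
  WellFoundedLT.fix fun j s =>
    insert (α (⋃ (i) (hi : i < j), s i hi)) (⋃ (i) (hi : i < j), s i hi)

theorem alphaChain_eq (j : J) :
    alphaChain α j = insert (α (⋃ i < j, alphaChain α i)) (⋃ i < j, alphaChain α i) :=
  WellFoundedLT.fix_eq _ j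

variable {α}

theorem alphaChain_subset_iUnion_lt {i j : J} (h : i < j) :
    alphaChain α i ⊆ ⋃ k < j, alphaChain α k :=
  subset_biUnion_of_mem (u := alphaChain α) h

theorem alphaChain_mono : Monotone (alphaChain α : J → Set A) := by
  intro i j h
  rcases h.lt_or_eq with h | rfl
  · exact (alphaChain_subset_iUnion_lt h).trans ((alphaChain_eq α j).symm ▸ subset_insert _ _)
  · rfl

theorem alphaChain_ssubset {i j : J} (hij : i < j)
    (hj : α (⋃ k < j, alphaChain α k) ∉ ⋃ k < j, alphaChain α k) :
    alphaChain α i ⊂ alphaChain α j := by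
  refine ssubset_of_subset_not_subset (alphaChain_mono hij.le) fun h => hj ?_
  exact alphaChain_subset_iUnion_lt hij (h ((alphaChain_eq α j).symm ▸ mem_insert _ _))

end AlphaChain

universe u

theorem exists_iUnion_alphaChain_eq_univ {A : Type u} {α : Set A → A}
    (hα : ∀ X : Set A, X ≠ univ → α X ∉ X) :
    ∃ o : Ordinal.{u}, ⋃ i < o, alphaChain α i = univ := by
  by_contra! h
  refine not_injective_of_ordinal (fun o : Ordinal.{u} => α (⋃ i < o, alphaChain α i))
    fun i j hij => ?_
  dsimp only at hij
  by_contra hne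
  wlog hlt : i < j generalizing i j
  · exact this j i hij.symm (Ne.symm hne) ((not_lt.mp hlt).lt_of_ne (Ne.symm hne))
  have hi : α (⋃ k < i, alphaChain α k) ∈ ⋃ k < j, alphaChain α k :=
    alphaChain_subset_iUnion_lt hlt ((alphaChain_eq α i).symm ▸ mem_insert _ _)
  exact hα _ (h j) (hij ▸ hi)

section RegularFamily

variable {α : Set A → A} {J : Type*} [LinearOrder J] [WellFoundedLT J] {j₀ : J}

theorem sUnion_ssubset_alphaChain_eq {j : J} (hj : j < j₀)
    (hα : ∀ j < j₀, α (⋃ k < j, alphaChain α k) ∉ ⋃ k < j, alphaChain α k) :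
    ⋃₀ {q ∈ insert ∅ (alphaChain α '' Iio j₀) | q ⊂ alphaChain α j} =
      ⋃ i < j, alphaChain α i := by
  apply Subset.antisymm
  · rintro x ⟨_, ⟨rfl | ⟨i, -, rfl⟩, hlt⟩, hx⟩
    · exact absurd hx (notMem_empty x)
    · have hij : i < j := lt_of_not_ge fun hji => hlt.not_subset (alphaChain_mono hji)
      exact alphaChain_subset_iUnion_lt hij hx
  · refine iUnion₂_subset fun i hij => subset_sUnion_of_mem ⟨?_, alphaChain_ssubset hij (hα j hj)⟩
    exact mem_insert_of_mem _ (mem_image_of_mem _ (hij.trans hj))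

theorem exists_least_of_subset_insert_empty_alphaChain {γ : Set (Set A)}
    (hγ : γ ⊆ insert ∅ (alphaChain α '' Iio j₀)) (hne : γ.Nonempty) :
    ∃ m ∈ γ, ∀ x ∈ γ, m ⊆ x := by
  by_cases hempty : ∅ ∈ γ
  · exact ⟨∅, hempty, fun x _ => empty_subset x⟩
  have hchain : ∀ x ∈ γ, ∃ i, alphaChain α i = x := fun x hx => by
    rcases hγ hx with rfl | ⟨i, -, rfl⟩
    exacts [absurd hx hempty, ⟨i, rfl⟩]
  obtain ⟨j, hj⟩ : {j | alphaChain α j ∈ γ}.Nonempty := by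
    obtain ⟨x, hx⟩ := hne
    obtain ⟨i, rfl⟩ := hchain x hx
    exact ⟨i, hx⟩
  obtain ⟨m, hm, hmin⟩ := wellFounded_lt.has_min _ ⟨j, hj⟩
  refine ⟨alphaChain α m, hm, fun x hx => ?_⟩
  obtain ⟨i, rfl⟩ := hchain x hx
  exact alphaChain_mono (not_lt.mp (hmin i hx))

theorem regularFamily_insert_empty_alphaChain
    (hα : ∀ j < j₀, α (⋃ k < j, alphaChain α k) ∉ ⋃ k < j, alphaChain α k) :
    RegularFamily α (insert ∅ (alphaChain α '' Iio j₀)) := by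
  refine ⟨?_, fun γ hγ hne => exists_least_of_subset_insert_empty_alphaChain hγ hne,
    mem_insert _ _, ?_⟩
  · rintro _ (rfl | ⟨i, -, rfl⟩) _ (rfl | ⟨j, -, rfl⟩)
    · exact Or.inl subset_rfl
    · exact Or.inl (empty_subset _)
    · exact Or.inr (empty_subset _)
    · exact (le_total i j).imp (fun h => alphaChain_mono h) fun h => alphaChain_mono h
  · rintro _ (rfl | ⟨j, hj, rfl⟩) hne
    · exact absurd hne not_nonempty_empty
    · rw [sUnion_ssubset_alphaChain_eq hj hα, union_singleton]
      exact alphaChain_eq α j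

end RegularFamily

theorem sUnion_maximal_regular_eq_univ
    (φ : Set A → A) (hφ : ∀ X : Set A, X.Nonempty → φ X ∈ X)
    (α : Set A → A) (hα : ∀ X : Set A, α X = φ Xᶜ) :
    ⋃₀ {p : Set A | ∃ P : Set (Set A), RegularFamily α P ∧ p ∈ P} = Set.univ := by
  have hnew : ∀ X : Set A, X ≠ univ → α X ∉ X := fun X hX => by
    rw [hα]
    exact hφ _ (nonempty_compl.mpr hX)
  obtain ⟨j₀, hj₀, hmin⟩ :=
    wellFounded_lt.has_min {o | ⋃ i < o, alphaChain α i = univ}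
      (exists_iUnion_alphaChain_eq_univ hnew)
  have hreg : RegularFamily α (insert ∅ (alphaChain α '' Iio j₀)) :=
    regularFamily_insert_empty_alphaChain fun j hj =>
      hnew _ fun h => hmin j h hj
  refine eq_univ_of_univ_subset (hj₀.symm.subset.trans (iUnion₂_subset fun i hi => ?_))
  exact subset_sUnion_of_mem ⟨_, hreg, mem_insert_of_mem _ (mem_image_of_mem _ hi)⟩
end

section
/- The map α restricted to a regular family Q with ⋃Q = A (excluding A itself from the domain if A ∈ Q) is injective: if q₁, q₂ ∈ Q with q₁ ≠ q₂ and both are proper subsets of A, then α(q₁) ≠ α(q₂). -/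
/-!
Any two regular families are comparable member by member: in a ⊆-least incomparable pair
`p = U ∪ {α U}`, `q = V ∪ {α V}` every smaller member of either family lies in the other set,
which forces `U = V` and hence `p = q`. Consequently, if `q₁ ⊊ q₂` then the least member of
`q₂`'s family strictly above `q₁` is `q₁ ∪ {α q₁}`, so `α q₁ ∈ q₂`; but `α q₂ ∉ q₂`.
-/

open Set

variable {A : Type*}

lemma subset_of_eq_insert_of_not_subset {p q U V : Set A} {a b : A}
    (hp : p = insert a U) (hq : q = insert b V) (hU : U ⊆ q) (hV : V ⊆ p) (hqp : ¬ q ⊆ p) :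
    U ⊆ V := by
  subst hp hq
  have hb : b ∉ insert a U := fun hb => hqp (insert_subset hb hV)
  exact (subset_insert_iff_of_notMem fun hbU => hb (subset_insert a U hbU)).1 hU

lemma eq_of_eq_insert_of_subset_of_ssubset {s U X : Set A} {a : A}
    (hs : s = insert a U) (hUX : U ⊆ X) (hX : X ⊂ s) : X = U := by
  subst hs
  have ha : a ∉ X := fun ha => hX.not_subset (insert_subset ha hUX)
  exact ((subset_insert_iff_of_notMem ha).1 hX.subset).antisymm hUX

def lowerUnion (P : Set (Set A)) (p : Set A) : Set A := ⋃₀ {q ∈ P | q ⊂ p}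

lemma lowerUnion_subset_iff {P : Set (Set A)} {p X : Set A} :
    lowerUnion P p ⊆ X ↔ ∀ q ∈ P, q ⊂ p → q ⊆ X := by
  simp only [lowerUnion, sUnion_subset_iff, mem_ofPred_eq, and_imp]

lemma lowerUnion_subset_of_comparable {P : Set (Set A)} {p q : Set A}
    (hcomp : ∀ x ∈ P, x ⊂ p → x ⊆ q ∨ q ⊆ x) (hqp : ¬ q ⊆ p) : lowerUnion P p ⊆ q :=
  lowerUnion_subset_iff.2 fun x hx hxp =>
    (hcomp x hx hxp).resolve_right fun hqx => hqp (hqx.trans hxp.subset)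

namespace RegularFamily

variable {α : Set A → A} {P P₁ P₂ : Set (Set A)}

lemma exists_minimal (hP : RegularFamily α P) {γ : Set (Set A)} (hγ : γ ⊆ P)
    (hne : γ.Nonempty) : ∃ m ∈ γ, ∀ x ∈ γ, m ⊆ x :=
  hP.2.1 γ hγ hne

lemma eq_insert_lowerUnion (hP : RegularFamily α P) {p : Set A} (hp : p ∈ P)
    (hne : p.Nonempty) : p = insert (α (lowerUnion P p)) (lowerUnion P p) := by
  rw [← union_singleton]
  exact hP.2.2.2 p hp hne

lemma subset_or_subset (h₁ : RegularFamily α P₁) (h₂ : RegularFamily α P₂)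
    {p₀ q₀ : Set A} (hp₀ : p₀ ∈ P₁) (hq₀ : q₀ ∈ P₂) : p₀ ⊆ q₀ ∨ q₀ ⊆ p₀ := by
  by_contra! hpq₀
  obtain ⟨p, ⟨hp, hp_incomp⟩, hp_min⟩ :=
    h₁.exists_minimal (γ := {p ∈ P₁ | ∃ q ∈ P₂, ¬ p ⊆ q ∧ ¬ q ⊆ p}) (sep_subset _ _)
      ⟨p₀, hp₀, q₀, hq₀, hpq₀⟩
  obtain ⟨q, ⟨hq, hpq, hqp⟩, hq_min⟩ :=
    h₂.exists_minimal (γ := {q ∈ P₂ | ¬ p ⊆ q ∧ ¬ q ⊆ p}) (sep_subset _ _) hp_incomp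
  have hU : lowerUnion P₁ p ⊆ q := lowerUnion_subset_of_comparable (fun x hx hxp => by
    by_contra! hxq
    exact hxp.not_subset (hp_min x ⟨hx, q, hq, hxq⟩)) hqp
  have hV : lowerUnion P₂ q ⊆ p := lowerUnion_subset_of_comparable (fun y hy hyq => by
    by_contra! hyp
    exact hyq.not_subset (hq_min y ⟨hy, hyp.2, hyp.1⟩)) hpq
  have hp_ne : p.Nonempty := nonempty_iff_ne_empty.2 fun h => hpq (h ▸ empty_subset q)
  have hq_ne : q.Nonempty := nonempty_iff_ne_empty.2 fun h => hqp (h ▸ empty_subset p)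
  have hp_eq := h₁.eq_insert_lowerUnion hp hp_ne
  have hq_eq := h₂.eq_insert_lowerUnion hq hq_ne
  have hUV := subset_of_eq_insert_of_not_subset hp_eq hq_eq hU hV hqp
  have hVU := subset_of_eq_insert_of_not_subset hq_eq hp_eq hV hU hpq
  exact hpq (by rw [hp_eq, hq_eq, hUV.antisymm hVU])

lemma alpha_mem_of_ssubset (h₁ : RegularFamily α P₁) (h₂ : RegularFamily α P₂)
    {q₁ q₂ : Set A} (hq₁ : q₁ ∈ P₁) (hq₂ : q₂ ∈ P₂) (hss : q₁ ⊂ q₂) : α q₁ ∈ q₂ := by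
  obtain ⟨s, ⟨hs, hq₁s⟩, hs_min⟩ :=
    h₂.exists_minimal (γ := {x ∈ P₂ | q₁ ⊂ x}) (sep_subset _ _) ⟨q₂, hq₂, hss⟩
  have hU : lowerUnion P₂ s ⊆ q₁ := lowerUnion_subset_iff.2 fun x hx hxs => by
    by_contra hxq₁
    have hq₁x : q₁ ⊂ x :=
      ((h₁.subset_or_subset h₂ hq₁ hx).resolve_right hxq₁).ssubset_of_not_subset hxq₁
    exact hxs.not_subset (hs_min x ⟨hx, hq₁x⟩)
  have hs_eq := h₂.eq_insert_lowerUnion hs (nonempty_of_ssubset' hq₁s)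
  have hq₁_eq : q₁ = lowerUnion P₂ s := eq_of_eq_insert_of_subset_of_ssubset hs_eq hU hq₁s
  have hαs : α q₁ ∈ s := by
    rw [hs_eq, hq₁_eq]
    exact mem_insert _ _
  exact hs_min q₂ ⟨hq₂, hss⟩ hαs

end RegularFamily

lemma alpha_notMem {φ α : Set A → A} (hφ : ∀ X : Set A, X.Nonempty → φ X ∈ X)
    (hα : ∀ X : Set A, α X = φ Xᶜ) {X : Set A} (hX : X ≠ univ) : α X ∉ X := by
  rw [hα]
  exact hφ Xᶜ (nonempty_compl.2 hX)

theorem alpha_injective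
    (φ : Set A → A) (hφ : ∀ X : Set A, X.Nonempty → φ X ∈ X)
    (α : Set A → A) (hα : ∀ X : Set A, α X = φ Xᶜ)
    (Q : Set (Set A)) (hQdef : Q = {p : Set A | ∃ P : Set (Set A), RegularFamily α P ∧ p ∈ P})
    (q₁ q₂ : Set A) (hq₁ : q₁ ∈ Q) (hq₂ : q₂ ∈ Q)
    (h₁ : q₁ ⊂ Set.univ) (h₂ : q₂ ⊂ Set.univ) (hne : q₁ ≠ q₂) :
    α q₁ ≠ α q₂ := by
  rw [hQdef] at hq₁ hq₂
  obtain ⟨P₁, hP₁, hq₁⟩ := hq₁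
  obtain ⟨P₂, hP₂, hq₂⟩ := hq₂
  intro heq
  rcases hP₁.subset_or_subset hP₂ hq₁ hq₂ with h | h
  · have hmem := hP₁.alpha_mem_of_ssubset hP₂ hq₁ hq₂ (h.ssubset_of_ne hne)
    exact alpha_notMem hφ hα h₂.ne (heq ▸ hmem)
  · have hmem := hP₂.alpha_mem_of_ssubset hP₁ hq₂ hq₁ (h.ssubset_of_ne hne.symm)
    exact alpha_notMem hφ hα h₁.ne (heq.symm ▸ hmem)
end

section
/- If P₁ and P₂ are regular families of subsets of A, neither contained in the other via initial segments, and r₁, r₂ are the least elements of P₁ \ P₃ and P₂ \ P₃ respectively (where P₃ = {p ∈ P₁ ∩ P₂ : {q ∈ P₁ : q ⊊ p} = {q ∈ P₂ : q ⊊ p}}), then r₁ = ⋃P₃ ∪ {α(⋃P₃)} = r₂. -/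
/-! The common segment `P₃` is closed downwards inside `P₁`, and `P₁` is a chain, so the members
of `P₁` strictly below the least `r₁ ∈ P₁ \ P₃` are exactly those of `P₃`. As `∅ ∈ P₃`, `r₁` is
nonempty, and regularity of `P₁` at `r₁` is the claimed identity; `P₃` is symmetric in `P₁` and
`P₂`, so the same argument applies to `r₂`. -/

open Set

variable {A : Type*}

def commonSegment (P₁ P₂ : Set (Set A)) : Set (Set A) :=
  {p ∈ P₁ ∩ P₂ | {q ∈ P₁ | q ⊂ p} = {q ∈ P₂ | q ⊂ p}}

theorem commonSegment_comm (P₁ P₂ : Set (Set A)) :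
    commonSegment P₁ P₂ = commonSegment P₂ P₁ := by
  ext p
  exact ⟨fun ⟨⟨h₁, h₂⟩, h⟩ => ⟨⟨h₂, h₁⟩, h.symm⟩, fun ⟨⟨h₂, h₁⟩, h⟩ => ⟨⟨h₁, h₂⟩, h.symm⟩⟩

theorem empty_mem_commonSegment {P₁ P₂ : Set (Set A)} (h₁ : ∅ ∈ P₁) (h₂ : ∅ ∈ P₂) :
    ∅ ∈ commonSegment P₁ P₂ := by
  have no_ssubset_empty : ∀ P : Set (Set A), {q ∈ P | q ⊂ ∅} = ∅ := fun P =>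
    eq_empty_of_forall_notMem fun q hq => hq.2.2 (empty_subset q)
  exact ⟨⟨h₁, h₂⟩, by rw [no_ssubset_empty, no_ssubset_empty]⟩

theorem mem_commonSegment_of_ssubset {P₁ P₂ : Set (Set A)} {p q : Set A}
    (hp : p ∈ commonSegment P₁ P₂) (hq : q ∈ P₁) (hqp : q ⊂ p) :
    q ∈ commonSegment P₁ P₂ := by
  obtain ⟨-, hseg⟩ := hp
  have below_p : ∀ s ∈ P₁, s ⊂ p → s ∈ P₂ := fun s hs hsp =>
    (hseg.subset ⟨hs, hsp⟩).1
  refine ⟨⟨hq, below_p q hq hqp⟩, ?_⟩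
  ext s
  refine ⟨fun ⟨hs, hsq⟩ => ⟨below_p s hs (hsq.trans hqp), hsq⟩, fun ⟨hs, hsq⟩ => ⟨?_, hsq⟩⟩
  exact (hseg.symm.subset ⟨hs, hsq.trans hqp⟩).1

theorem setOf_lt_eq_of_isLeast_diff {β : Type*} [PartialOrder β] {S T : Set β} {r : β}
    (hS : ∀ p ∈ S, ∀ q ∈ S, p ≤ q ∨ q ≤ p) (hTS : T ⊆ S)
    (hT : ∀ p ∈ T, ∀ q ∈ S, q < p → q ∈ T) (hr : IsLeast (S \ T) r) :
    {q ∈ S | q < r} = T := by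
  obtain ⟨⟨hrS, hrT⟩, hr_le⟩ := hr
  ext q
  refine ⟨fun ⟨hqS, hqr⟩ => ?_, fun hqT => ⟨hTS hqT, ?_⟩⟩
  · by_contra hqT
    exact (hqr.trans_le (hr_le ⟨hqS, hqT⟩)).false
  · have hqr : q ≠ r := fun h => hrT (h ▸ hqT)
    rcases hS q (hTS hqT) r hrS with hle | hle
    · exact hle.lt_of_ne hqr
    · exact absurd (hT q hqT r hrS (hle.lt_of_ne hqr.symm)) hrT

theorem RegularFamily.eq_of_isLeast_diff_commonSegment {α : Set A → A} {P₁ P₂ : Set (Set A)}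
    {r : Set A} (h₁ : RegularFamily α P₁) (hP₂ : ∅ ∈ P₂)
    (hr : IsLeast (P₁ \ commonSegment P₁ P₂) r) :
    r = ⋃₀ commonSegment P₁ P₂ ∪ {α (⋃₀ commonSegment P₁ P₂)} := by
  obtain ⟨hchain, -, hemp, hsucc⟩ := h₁
  have hr_ne : r.Nonempty := nonempty_iff_ne_empty.2 fun h =>
    hr.1.2 (h ▸ empty_mem_commonSegment hemp hP₂)
  have hbelow : {q ∈ P₁ | q ⊂ r} = commonSegment P₁ P₂ :=
    setOf_lt_eq_of_isLeast_diff hchain (fun _ hp => hp.1.1)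
      (fun _ hp _ hq hqp => mem_commonSegment_of_ssubset hp hq hqp) hr
  rw [← hbelow]
  exact hsucc r hr.1.1 hr_ne

theorem least_above_common_segment_general
    (α : Set A → A)
    (P₁ P₂ : Set (Set A)) (h₁ : RegularFamily α P₁) (h₂ : RegularFamily α P₂)
    (P₃ : Set (Set A))
    (hP₃ : P₃ = {p ∈ P₁ ∩ P₂ | {q ∈ P₁ | q ⊂ p} = {q ∈ P₂ | q ⊂ p}})
    (r₁ : Set A) (hr₁ : r₁ ∈ P₁ \ P₃) (hr₁least : ∀ x ∈ P₁ \ P₃, r₁ ⊆ x)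
    (r₂ : Set A) (hr₂ : r₂ ∈ P₂ \ P₃) (hr₂least : ∀ x ∈ P₂ \ P₃, r₂ ⊆ x) :
    r₁ = (⋃₀ P₃) ∪ {α (⋃₀ P₃)} ∧ r₂ = (⋃₀ P₃) ∪ {α (⋃₀ P₃)} := by
  change P₃ = commonSegment P₁ P₂ at hP₃
  subst hP₃
  refine ⟨h₁.eq_of_isLeast_diff_commonSegment h₂.2.2.1 ⟨hr₁, fun x hx => hr₁least x hx⟩, ?_⟩
  rw [commonSegment_comm] at hr₂ hr₂least ⊢
  exact h₂.eq_of_isLeast_diff_commonSegment h₁.2.2.1 ⟨hr₂, fun x hx => hr₂least x hx⟩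

theorem least_above_common_segment
    (φ : Set A → A) (hφ : ∀ X : Set A, X.Nonempty → φ X ∈ X)
    (α : Set A → A) (hα : ∀ X : Set A, α X = φ Xᶜ)
    (P₁ P₂ : Set (Set A)) (h₁ : RegularFamily α P₁) (h₂ : RegularFamily α P₂)
    (P₃ : Set (Set A))
    (hP₃ : P₃ = {p ∈ P₁ ∩ P₂ | {q ∈ P₁ | q ⊂ p} = {q ∈ P₂ | q ⊂ p}})
    (hne₁ : (P₁ \ P₃).Nonempty) (hne₂ : (P₂ \ P₃).Nonempty)
    (r₁ : Set A) (hr₁ : r₁ ∈ P₁ \ P₃) (hr₁least : ∀ x ∈ P₁ \ P₃, r₁ ⊆ x)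
    (r₂ : Set A) (hr₂ : r₂ ∈ P₂ \ P₃) (hr₂least : ∀ x ∈ P₂ \ P₃, r₂ ⊆ x) :
    r₁ = (⋃₀ P₃) ∪ {α (⋃₀ P₃)} ∧ r₂ = (⋃₀ P₃) ∪ {α (⋃₀ P₃)} :=
  least_above_common_segment_general α P₁ P₂ h₁ h₂ P₃ hP₃ r₁ hr₁ hr₁least r₂ hr₂ hr₂least
end
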